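/- arXiv:2306.04514 — 2 statements merged into one kernel-verified Lean document; each statement's English description precedes it below -/
import Mathlib

section
/- Let λ ∈ Y^{++} and β^∨ ∈ Φ^∨₊ a positive coroot, and let u ∈ Wᵛ be such that u⁻¹(λ+β^∨) ∈ Y^{++} (i.e. λ+β^∨ belongs to the vectorial chamber of u). Then ℓ(s_β u) = ℓ(s_β) + ℓ(u). -/
/-- Sign of an integer, with the convention `isgn 0 = 1`. -/
def isgn (n : ℤ) : ℤ := if 0 ≤ n then 1 else -1

/-- The multiplicative group structure on `AddAut A` that older Mathlib provided
(`g * h = h.trans g`, `1 = refl`, `g⁻¹ = g.symm`); current Mathlib makes `AddAut A` an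
additive group instead. -/
instance AddAut.oldMulGroup (A : Type*) [Add A] : Group (AddAut A) where
  mul g h := AddEquiv.trans h g
  one := AddEquiv.refl _
  inv := AddEquiv.symm
  mul_assoc _ _ _ := rfl
  one_mul _ := rfl
  mul_one _ := rfl
  inv_mul_cancel := AddEquiv.self_trans_symm

/-- A Kac–Moody root datum: a finite index set `I`, a generalized Cartan matrix `A`,
free `ℤ`-modules `X` and `Y` of finite rank in perfect duality `pairE`, and linearly
independent families of simple roots `α` and simple coroots `αv` with
`⟨αv i, α j⟩ = A i j`. -/
structure KM (I X Y : Type*) [Fintype I] [AddCommGroup X] [AddCommGroup Y] where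
  A : I → I → ℤ
  pairE : Y ≃+ (X →+ ℤ)
  α : I → X
  αv : I → Y
  pair_av_a : ∀ i j, pairE (αv i) (α j) = A i j
  A_diag : ∀ i, A i i = 2
  A_offdiag : ∀ i j, i ≠ j → A i j ≤ 0
  A_zero_iff : ∀ i j, A i j = 0 → A j i = 0
  freeX : Module.Free ℤ X
  freeY : Module.Free ℤ Y
  finX : Module.Finite ℤ X
  finY : Module.Finite ℤ Y
  indep_α : LinearIndependent ℤ α
  indep_αv : LinearIndependent ℤ αv

namespace KM

variable {I X Y : Type*} [Fintype I] [AddCommGroup X] [AddCommGroup Y] (D : KM I X Y)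

open scoped Classical

/-- The duality pairing `⟨y, x⟩`. -/
def pr (y : Y) (x : X) : ℤ := D.pairE y x

/-- Underlying function of the simple reflection `s_i` on `X`. -/
def sXfun (i : I) (x : X) : X := x - D.pr (D.αv i) x • D.α i

lemma sX_invol (i : I) : Function.Involutive (D.sXfun i) := by
  intro x
  have h2 : D.pairE (D.αv i) (D.α i) = 2 := by rw [D.pair_av_a, D.A_diag]
  show (x - D.pairE (D.αv i) x • D.α i) -
      D.pairE (D.αv i) (x - D.pairE (D.αv i) x • D.α i) • D.α i = x
  rw [map_sub, map_zsmul, h2, smul_eq_mul]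
  have h : D.pairE (D.αv i) x - D.pairE (D.αv i) x * 2 = -(D.pairE (D.αv i) x) := by ring
  rw [h, neg_smul]
  abel

/-- The simple reflection `s_i : x ↦ x - ⟨αv i, x⟩ • α i` as an automorphism of `X`. -/
def sX (i : I) : AddAut X :=
  AddEquiv.mk' (D.sX_invol i).toPerm (by
    intro x y
    show ((x + y) - D.pairE (D.αv i) (x + y) • D.α i)
        = (x - D.pairE (D.αv i) x • D.α i) + (y - D.pairE (D.αv i) y • D.α i)
    rw [map_add, add_smul]
    abel)

/-- The vectorial Weyl group `Wᵛ`, as the subgroup of `AddAut X` generated by the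
simple reflections. -/
def Wg : Subgroup (AddAut X) := Subgroup.closure (Set.range D.sX)

/-- The contragredient action of an automorphism `f` of `X` on `Y`; it is characterized by
`⟨actY f y, x⟩ = ⟨y, f⁻¹ x⟩`. -/
def actY (f : AddAut X) (y : Y) : Y :=
  D.pairE.symm ((D.pairE y).comp (AddEquiv.toAddMonoidHom (AddEquiv.symm f)))

/-- The set of real roots `Φ = Wᵛ · {α i}`. -/
def Phi : Set X := {x | ∃ p : AddAut X × I, p.1 ∈ D.Wg ∧ x = p.1 (D.α p.2)}

/-- The set of positive real roots `Φ₊`. -/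
def PhiPos : Set X := {x | x ∈ D.Phi ∧ ∃ c : I → ℕ, x = ∑ i, (c i : ℤ) • D.α i}

/-- The set of negative real roots `Φ₋ = -Φ₊`. -/
def PhiNeg : Set X := {x | -x ∈ D.PhiPos}

/-- The coroot `β^∨` of a real root `β`: if `β = w (α i)` then `β^∨ = w (αv i)`
(this is independent of the chosen expression). -/
noncomputable def coroot (x : X) : Y :=
  if h : ∃ p : AddAut X × I, p.1 ∈ D.Wg ∧ x = p.1 (D.α p.2) then
    D.actY h.choose.1 (D.αv h.choose.2)
  else 0

/-- The reflection `s_β` associated to a real root `β`: if `β = w (α i)` then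
`s_β = w s_i w⁻¹` (independent of the chosen expression). -/
noncomputable def srefl (x : X) : AddAut X :=
  if h : ∃ p : AddAut X × I, p.1 ∈ D.Wg ∧ x = p.1 (D.α p.2) then
    h.choose.1 * D.sX h.choose.2 * h.choose.1⁻¹
  else 1

/-- The integral fundamental chamber `Y^{++}` of dominant coweights. -/
def Ypp : Set Y := {y | ∀ i, 0 ≤ D.pr y (D.α i)}

/-- The integral Tits cone `Y⁺ = Wᵛ · Y^{++}`. -/
def Yplus : Set Y := {y | ∃ p : AddAut X × Y, p.1 ∈ D.Wg ∧ p.2 ∈ D.Ypp ∧ y = D.actY p.1 p.2}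

/-- The dominant representative `λ^{++}` of `λ ∈ Y⁺` (the unique dominant element of the
orbit `Wᵛ · λ`). -/
noncomputable def dompp (y : Y) : Y :=
  if h : ∃ p : AddAut X × Y, p.1 ∈ D.Wg ∧ p.2 ∈ D.Ypp ∧ y = D.actY p.1 p.2 then
    h.choose.2
  else y

/-- The inversion set `Inv(w) = {α ∈ Φ₊ | w α ∈ Φ₋}`. -/
def invSet (w : AddAut X) : Set X := {a | a ∈ D.PhiPos ∧ w a ∈ D.PhiNeg}

/-- The Bruhat length `ℓ(w) = |Inv(w)|`. -/
noncomputable def len (w : AddAut X) : ℕ := (D.invSet w).ncard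

/-- The relative length `ℓ_v(w) = |Inv(w⁻¹)∖Inv(v⁻¹)| − |Inv(w⁻¹)∩Inv(v⁻¹)|`. -/
noncomputable def rlen (v w : AddAut X) : ℤ :=
  ((D.invSet w⁻¹ \ D.invSet v⁻¹).ncard : ℤ) - ((D.invSet w⁻¹ ∩ D.invSet v⁻¹).ncard : ℤ)

/-- `v^λ`: the minimal-length element of `Wᵛ` sending `λ^{++}` to `λ`. -/
noncomputable def vmin (l : Y) : AddAut X :=
  if h : ∃ w : AddAut X, w ∈ D.Wg ∧ D.actY w (D.dompp l) = l ∧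
      ∀ w' : AddAut X, w' ∈ D.Wg → D.actY w' (D.dompp l) = l → D.len w ≤ D.len w'
  then h.choose else 1

/-- The set of reflections of `Wᵛ`. -/
def reflections : Set (AddAut X) := {r | ∃ b ∈ D.PhiPos, r = D.srefl b}

/-- One step of the Bruhat order on `Wᵛ`. -/
def vectStep (u u' : AddAut X) : Prop :=
  ∃ r ∈ D.reflections, u' = u * r ∧ D.len u < D.len u'

/-- The Bruhat order on `Wᵛ`. -/
def vlt : AddAut X → AddAut X → Prop := Relation.TransGen D.vectStep

/-- One step of the relative Bruhat order `<_v` on `Wᵛ`. -/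
def rvStep (v u u' : AddAut X) : Prop :=
  ∃ r ∈ D.reflections, u' = u * r ∧ D.rlen v u < D.rlen v u'

/-- The relative Bruhat order `<_v` on `Wᵛ`. -/
def rvlt (v : AddAut X) : AddAut X → AddAut X → Prop := Relation.TransGen (D.rvStep v)

/-- The stabilizer `W_λ` of `λ` in `Wᵛ`. -/
def Wstab (l : Y) : Set (AddAut X) := {u | u ∈ D.Wg ∧ D.actY u l = l}

/-- `v` is the minimal-length representative of its coset `v W_λ`. -/
def IsMinRep (l : Y) (v : AddAut X) : Prop :=
  v ∈ D.Wg ∧ ∀ u ∈ D.Wstab l, D.len v ≤ D.len (v * u)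

/-- The action of `π^λ w ∈ Y ⋊ Wᵛ` on affine roots:
`π^λ w (β + nπ) = w β + (n + ⟨λ, w β⟩)π`. -/
def affAct (a : Y × AddAut X) (r : X × ℤ) : X × ℤ :=
  (a.2 r.1, r.2 + D.pr a.1 (a.2 r.1))

/-- The set `Φᵃ₊` of positive affine roots. -/
def PhiAffPos : Set (X × ℤ) :=
  {r | r.1 ∈ D.Phi ∧ (0 < r.2 ∨ (r.2 = 0 ∧ r.1 ∈ D.PhiPos))}

/-- The affine root `β[n] = sgn(n)β + |n|π`. -/
def aroot (b : X) (n : ℤ) : X × ℤ := (isgn n • b, |n|)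

/-- The affine reflection `s_{β[n]} = π^{nβ^∨} s_β`, as an element of `Y ⋊ Wᵛ`. -/
noncomputable def saff (b : X) (n : ℤ) : Y × AddAut X := (n • D.coroot b, D.srefl b)

/-- Multiplication in the semidirect product `Y ⋊ Wᵛ`:
`π^λ w · π^μ v = π^{λ + w μ} (w v)`. -/
def mulA (a b : Y × AddAut X) : Y × AddAut X := (a.1 + D.actY a.2 b.1, a.2 * b.2)

/-- One step `x < x·s_{β[n]}` of the affine Bruhat order on `W⁺`, for `β ∈ Φ₊`, `n ∈ ℤ`,
requiring both elements to lie in `W⁺` and `x(β[n]) ∈ Φᵃ₊`. -/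
def astep (a b : Y × AddAut X) : Prop :=
  a.1 ∈ D.Yplus ∧ b.1 ∈ D.Yplus ∧ a.2 ∈ D.Wg ∧ b.2 ∈ D.Wg ∧
    ∃ g ∈ D.PhiPos, ∃ m : ℤ,
      D.affAct a (aroot (X := X) g m) ∈ D.PhiAffPos ∧ b = D.mulA a (D.saff g m)

/-- The (strict) affine Bruhat order on `W⁺`. -/
def alt : (Y × AddAut X) → (Y × AddAut X) → Prop := Relation.TransGen D.astep

/-- The affine Bruhat order on `W⁺`. -/
def ale (a b : Y × AddAut X) : Prop := a = b ∨ D.alt a b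

/-- `b` covers `a` for the affine Bruhat order: `a < b` and nothing lies strictly
between them. -/
def acovers (a b : Y × AddAut X) : Prop :=
  D.alt a b ∧ ∀ c, D.alt a c → D.alt c b → False

/-- `Λ` is a family of fundamental weights: `⟨αv i, Λ j⟩ = δ_{ij}`. -/
def IsFundWeights (Λ : I → X) : Prop :=
  ∀ i j, D.pr (D.αv i) (Λ j) = if i = j then 1 else 0

/-- The height `ht(λ) = ⟨λ, ρ⟩` where `ρ = Σ_i Λ_i`. -/
def ht (Λ : I → X) (l : Y) : ℤ := D.pr l (∑ i, Λ i)

/-- The affine length `ℓᵃ` with integral values. -/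
noncomputable def alen (Λ : I → X) (a : Y × AddAut X) : ℤ :=
  2 * D.ht Λ (D.dompp a.1) +
    ((({x | x ∈ D.invSet a.2⁻¹ ∧ 0 ≤ D.pr a.1 x}).ncard : ℤ) -
      (({x | x ∈ D.invSet a.2⁻¹ ∧ D.pr a.1 x < 0}).ncard : ℤ))

end KM

/-!
A positive root `γ` cannot be inverted both by `u⁻¹` and by `s_β`: the first makes
`⟨u⁻¹(λ + β^∨), u⁻¹ γ⟩ = ⟨λ + β^∨, γ⟩ ≤ 0`, while the second forces `⟨β^∨, γ⟩ > 0`, hence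
`⟨λ + β^∨, γ⟩ > 0` as `λ` is dominant. When `Inv(u⁻¹) ∩ Inv(v) = ∅` the inversion set of `v u`
is the disjoint union `Inv(u) ⊔ u⁻¹ Inv(v)`, so lengths add.

The substantial input is that every real root is positive or negative (Humphreys, *Reflection
groups and Coxeter groups*, §5.4), which comes down to rank two: there the alternating words are
analysed case by case in the Cartan entries when `A i j * A j i < 4`, and through a positivity
invariant otherwise.
-/

namespace AddAut

variable {A : Type*} [Add A]

@[simp] lemma oldMul_apply (e f : AddAut A) (a : A) : (e * f) a = e (f a) := rfl

@[simp] lemma oldOne_apply (a : A) : (1 : AddAut A) a = a := rfl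

@[simp] lemma oldInv_apply_self (e : AddAut A) (a : A) : e (e⁻¹ a) = a := e.apply_symm_apply a

@[simp] lemma oldApply_inv_self (e : AddAut A) (a : A) : e⁻¹ (e a) = a := e.symm_apply_apply a

end AddAut

namespace KM

variable {I X Y : Type*} [Fintype I] [AddCommGroup X] [AddCommGroup Y] (D : KM I X Y)

section Pairing

lemma pr_add_left (y₁ y₂ : Y) (x : X) : D.pr (y₁ + y₂) x = D.pr y₁ x + D.pr y₂ x := by
  simp [pr]

lemma pr_add_right (y : Y) (x₁ x₂ : X) : D.pr y (x₁ + x₂) = D.pr y x₁ + D.pr y x₂ :=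
  map_add _ _ _

lemma pr_neg_right (y : Y) (x : X) : D.pr y (-x) = -D.pr y x := map_neg _ _

lemma pr_zsmul_right (y : Y) (n : ℤ) (x : X) : D.pr y (n • x) = n * D.pr y x := by
  simp [pr]

lemma pr_sum_right {κ : Type*} (y : Y) (s : Finset κ) (f : κ → X) :
    D.pr y (∑ t ∈ s, f t) = ∑ t ∈ s, D.pr y (f t) :=
  map_sum _ _ _

lemma pr_αv_α (i j : I) : D.pr (D.αv i) (D.α j) = D.A i j := D.pair_av_a i j

lemma pr_αv_α_self (i : I) : D.pr (D.αv i) (D.α i) = 2 := by rw [pr_αv_α, A_diag]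

lemma pr_actY (f : AddAut X) (y : Y) (x : X) : D.pr (D.actY f y) x = D.pr y (f⁻¹ x) := by
  simp only [actY, pr, AddEquiv.apply_symm_apply]
  rfl

end Pairing

section Words

lemma sX_apply (i : I) (x : X) : D.sX i x = x - D.pr (D.αv i) x • D.α i := rfl

lemma sX_α_self (i : I) : D.sX i (D.α i) = -D.α i := by
  rw [sX_apply, pr_αv_α_self, two_zsmul]
  abel

@[simp] lemma sX_mul_self (i : I) : D.sX i * D.sX i = 1 := by
  ext x
  exact D.sX_invol i x

lemma sX_inv (i : I) : (D.sX i)⁻¹ = D.sX i :=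
  inv_eq_of_mul_eq_one_right (D.sX_mul_self i)

lemma mul_sX_mul_sX (w : AddAut X) (i : I) : w * D.sX i * D.sX i = w := by
  rw [mul_assoc, sX_mul_self, mul_one]

lemma sX_mem (i : I) : D.sX i ∈ D.Wg := Subgroup.subset_closure ⟨i, rfl⟩

def wordProd (l : List I) : AddAut X := (l.map D.sX).prod

@[simp] lemma wordProd_nil : D.wordProd ([] : List I) = 1 := rfl

@[simp] lemma wordProd_cons (i : I) (l : List I) :
    D.wordProd (i :: l) = D.sX i * D.wordProd l := by
  simp [wordProd]

lemma wordProd_append (l₁ l₂ : List I) :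
    D.wordProd (l₁ ++ l₂) = D.wordProd l₁ * D.wordProd l₂ := by
  simp [wordProd]

lemma wordProd_concat (l : List I) (j : I) : D.wordProd (l ++ [j]) = D.wordProd l * D.sX j := by
  simp [wordProd_append]

lemma wordProd_mem (l : List I) : D.wordProd l ∈ D.Wg := by
  induction l with
  | nil => exact one_mem _
  | cons i l ih => rw [wordProd_cons]; exact mul_mem (D.sX_mem i) ih

lemma mem_Wg_iff {w : AddAut X} : w ∈ D.Wg ↔ ∃ l : List I, D.wordProd l = w := by
  refine ⟨fun hw => ?_, fun ⟨l, hl⟩ => hl ▸ D.wordProd_mem l⟩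
  induction hw using Subgroup.closure_induction'' with
  | one => exact ⟨[], rfl⟩
  | mem x hx => obtain ⟨i, rfl⟩ := hx; exact ⟨[i], by simp⟩
  | inv_mem x hx => obtain ⟨i, rfl⟩ := hx; exact ⟨[i], by simp [sX_inv]⟩
  | mul x y _ _ hx hy =>
      obtain ⟨lx, rfl⟩ := hx
      obtain ⟨ly, rfl⟩ := hy
      exact ⟨lx ++ ly, D.wordProd_append lx ly⟩

noncomputable def wordLength (w : AddAut X) : ℕ :=
  sInf {n | ∃ l : List I, l.length = n ∧ D.wordProd l = w}

lemma wordLength_le {w : AddAut X} {l : List I} (h : D.wordProd l = w) :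
    D.wordLength w ≤ l.length :=
  Nat.sInf_le ⟨l, rfl, h⟩

lemma exists_reduced_word {w : AddAut X} (hw : w ∈ D.Wg) :
    ∃ l : List I, l.length = D.wordLength w ∧ D.wordProd l = w := by
  obtain ⟨l, hl⟩ := D.mem_Wg_iff.mp hw
  exact Nat.sInf_mem (s := {n | ∃ l : List I, l.length = n ∧ D.wordProd l = w}) ⟨_, l, rfl, hl⟩

lemma wordLength_mul_sX_le {w : AddAut X} (hw : w ∈ D.Wg) (i : I) :
    D.wordLength (w * D.sX i) ≤ D.wordLength w + 1 := by
  obtain ⟨l, hl, rfl⟩ := D.exists_reduced_word hw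
  simpa [hl] using D.wordLength_le (D.wordProd_concat l i)

lemma wordLength_le_mul_sX {w : AddAut X} (hw : w ∈ D.Wg) (i : I) :
    D.wordLength w ≤ D.wordLength (w * D.sX i) + 1 := by
  simpa only [mul_sX_mul_sX] using D.wordLength_mul_sX_le (mul_mem hw (D.sX_mem i)) i

lemma exists_wordLength_mul_sX_lt {w : AddAut X} (hw : w ∈ D.Wg) (h : w ≠ 1) :
    ∃ j, D.wordLength (w * D.sX j) < D.wordLength w := by
  obtain ⟨l, hl, rfl⟩ := D.exists_reduced_word hw
  rcases l.eq_nil_or_concat with rfl | ⟨l₀, j, rfl⟩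
  · exact absurd rfl h
  refine ⟨j, ?_⟩
  rw [List.concat_eq_append] at hl ⊢
  have : D.wordLength (D.wordProd (l₀ ++ [j]) * D.sX j) ≤ l₀.length :=
    D.wordLength_le (by rw [wordProd_concat, mul_sX_mul_sX])
  simp only [List.length_append, List.length_singleton] at hl
  omega

end Words

section Determinant

/-- On `Wᵛ` this is the sign character `w ↦ (-1)^ℓ(w)`. -/
noncomputable def autDet {X : Type*} [AddCommGroup X] (w : AddAut X) : ℤ :=
  LinearMap.det (AddMonoidHom.toIntLinearMap w.toAddMonoidHom)

lemma autDet_mul {X : Type*} [AddCommGroup X] (w v : AddAut X) :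
    autDet (w * v) = autDet w * autDet v :=
  LinearMap.det_comp (AddMonoidHom.toIntLinearMap w.toAddMonoidHom)
    (AddMonoidHom.toIntLinearMap v.toAddMonoidHom)

@[simp] lemma autDet_one {X : Type*} [AddCommGroup X] : autDet (1 : AddAut X) = 1 :=
  LinearMap.det_id

lemma autDet_sX (i : I) : autDet (D.sX i) = -1 := by
  have := D.freeX
  have := D.finX
  set b := Module.Free.chooseBasis ℤ X
  rw [autDet, ← LinearMap.det_toMatrix b]
  have hM : LinearMap.toMatrix b b (AddMonoidHom.toIntLinearMap (D.sX i).toAddMonoidHom) =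
      1 + Matrix.replicateCol Unit (fun k => -(b.repr (D.α i) k)) *
        Matrix.replicateRow Unit (fun k => D.pr (D.αv i) (b k)) := by
    ext k l
    rw [LinearMap.toMatrix_apply]
    change b.repr (b l - D.pr (D.αv i) (b l) • D.α i) k = _
    simp [Matrix.mul_apply, Matrix.one_apply, sub_eq_add_neg, mul_comm, Finsupp.single_apply,
      eq_comm]
  have hsum : ∑ k, D.pr (D.αv i) (b k) * b.repr (D.α i) k = 2 := by
    conv_rhs => rw [← D.pr_αv_α_self i, ← b.sum_repr (D.α i), pr_sum_right]
    exact Finset.sum_congr rfl fun k _ => by rw [pr_zsmul_right, mul_comm]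
  rw [hM, Matrix.det_one_add_replicateCol_mul_replicateRow, dotProduct]
  simp only [mul_neg, Finset.sum_neg_distrib, hsum]
  norm_num

lemma autDet_wordProd (l : List I) : autDet (D.wordProd l) = (-1) ^ l.length := by
  induction l with
  | nil => exact autDet_one
  | cons i l ih => rw [wordProd_cons, autDet_mul, D.autDet_sX, ih, List.length_cons, pow_succ']

lemma wordLength_mul_sX_ne {w : AddAut X} (hw : w ∈ D.Wg) (i : I) :
    D.wordLength (w * D.sX i) ≠ D.wordLength w := by
  intro h
  obtain ⟨l, hl, rfl⟩ := D.exists_reduced_word hw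
  obtain ⟨l', hl', hl'w⟩ := D.exists_reduced_word (mul_mem (D.wordProd_mem l) (D.sX_mem i))
  have := congrArg autDet hl'w
  rw [autDet_mul, D.autDet_sX, D.autDet_wordProd, D.autDet_wordProd, hl', h, hl] at this
  have : ((-1 : ℤ)) ^ D.wordLength (D.wordProd l) ≠ 0 := pow_ne_zero _ (by norm_num)
  omega

end Determinant

section Roots

open Submodule

lemma coeffs_eq_of_sum_eq {c d : I → ℤ} (h : ∑ t, c t • D.α t = ∑ t, d t • D.α t) : c = d :=
  funext (Fintype.linearIndependent_iffₛ.mp D.indep_α c d h)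

lemma mem_Phi_iff {x : X} : x ∈ D.Phi ↔ ∃ w ∈ D.Wg, ∃ t, x = w (D.α t) :=
  ⟨fun ⟨⟨w, t⟩, hw, hx⟩ => ⟨w, hw, t, hx⟩, fun ⟨w, hw, t, hx⟩ => ⟨(w, t), hw, hx⟩⟩

lemma α_mem_Phi (t : I) : D.α t ∈ D.Phi := D.mem_Phi_iff.mpr ⟨1, one_mem _, t, rfl⟩

lemma apply_mem_Phi {w : AddAut X} {x : X} (hw : w ∈ D.Wg) (hx : x ∈ D.Phi) : w x ∈ D.Phi := by
  obtain ⟨w₁, hw₁, t, rfl⟩ := D.mem_Phi_iff.mp hx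
  exact D.mem_Phi_iff.mpr ⟨w * w₁, mul_mem hw hw₁, t, rfl⟩

lemma zero_notMem_Phi : (0 : X) ∉ D.Phi := by
  intro h
  obtain ⟨w, -, t, h0⟩ := D.mem_Phi_iff.mp h
  refine D.indep_α.ne_zero t ?_
  simpa using congrArg (fun z => w⁻¹ z) h0.symm

lemma apply_mem_span_α {w : AddAut X} (hw : w ∈ D.Wg) {x : X}
    (hx : x ∈ span ℤ (Set.range D.α)) : w x ∈ span ℤ (Set.range D.α) := by
  obtain ⟨l, rfl⟩ := D.mem_Wg_iff.mp hw
  clear hw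
  induction l with
  | nil => exact hx
  | cons i l ih =>
      rw [wordProd_cons, AddAut.oldMul_apply, sX_apply]
      exact sub_mem ih (smul_mem _ _ (subset_span ⟨i, rfl⟩))

lemma exists_coeffs_of_mem_Phi {x : X} (hx : x ∈ D.Phi) : ∃ d : I → ℤ, x = ∑ t, d t • D.α t := by
  obtain ⟨w, hw, t, rfl⟩ := D.mem_Phi_iff.mp hx
  obtain ⟨d, hd⟩ := mem_span_range_iff_exists_fun ℤ |>.mp
    (D.apply_mem_span_α hw (subset_span ⟨t, rfl⟩))
  exact ⟨d, hd.symm⟩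

lemma mem_PhiPos_iff {x : X} : x ∈ D.PhiPos ↔
    x ∈ D.Phi ∧ ∃ d : I → ℤ, (∀ t, 0 ≤ d t) ∧ x = ∑ t, d t • D.α t := by
  constructor
  · rintro ⟨h, c, rfl⟩
    exact ⟨h, fun t => c t, fun t => Int.natCast_nonneg _, rfl⟩
  · rintro ⟨h, d, hd, rfl⟩
    exact ⟨h, fun t => (d t).toNat,
      Finset.sum_congr rfl fun t _ => by rw [Int.toNat_of_nonneg (hd t)]⟩

lemma mem_PhiNeg_iff {x : X} : x ∈ D.PhiNeg ↔ -x ∈ D.PhiPos := Iff.rfl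

lemma α_mem_PhiPos (t : I) : D.α t ∈ D.PhiPos := by
  classical
  refine D.mem_PhiPos_iff.mpr ⟨D.α_mem_Phi t, Pi.single t 1, fun s => ?_, by simp⟩
  by_cases h : s = t <;> simp [h]

lemma notMem_PhiNeg_of_mem_PhiPos {x : X} (hpos : x ∈ D.PhiPos) : x ∉ D.PhiNeg := by
  intro hneg
  obtain ⟨hx, d, hd, hxd⟩ := D.mem_PhiPos_iff.mp hpos
  obtain ⟨-, e, he, hxe⟩ := D.mem_PhiPos_iff.mp hneg
  have hsum : ∑ t, (d t + e t) • D.α t = ∑ t, (0 : ℤ) • D.α t := by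
    simp only [add_smul, Finset.sum_add_distrib, ← hxd, ← hxe, zero_smul, Finset.sum_const_zero,
      add_neg_cancel]
  have hd0 : ∀ t, d t = 0 := fun t => by
    have := congrFun (D.coeffs_eq_of_sum_eq hsum) t
    linarith [hd t, he t]
  refine D.zero_notMem_Phi ?_
  rwa [hxd, Finset.sum_eq_zero fun t _ => by rw [hd0 t, zero_smul]] at hx

lemma mem_PhiPos_of_eq_add {x y z : X} (hz : z ∈ D.Phi) (hx : x ∈ D.PhiPos) (hy : y ∈ D.PhiPos)
    {a b : ℤ} (ha : 0 ≤ a) (hb : 0 ≤ b) (h : z = a • x + b • y) : z ∈ D.PhiPos := by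
  obtain ⟨-, c, hc, rfl⟩ := D.mem_PhiPos_iff.mp hx
  obtain ⟨-, d, hd, rfl⟩ := D.mem_PhiPos_iff.mp hy
  refine D.mem_PhiPos_iff.mpr ⟨hz, fun t => a * c t + b * d t,
    fun t => add_nonneg (mul_nonneg ha (hc t)) (mul_nonneg hb (hd t)), ?_⟩
  simp only [h, Finset.smul_sum, smul_smul, ← Finset.sum_add_distrib, add_smul]

lemma pr_nonneg_of_mem_PhiPos {y : Y} (hy : y ∈ D.Ypp) {x : X} (hx : x ∈ D.PhiPos) :
    0 ≤ D.pr y x := by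
  obtain ⟨-, d, hd, rfl⟩ := D.mem_PhiPos_iff.mp hx
  rw [pr_sum_right]
  exact Finset.sum_nonneg fun t _ => by rw [pr_zsmul_right]; exact mul_nonneg (hd t) (hy t)

lemma pr_nonpos_of_mem_PhiNeg {y : Y} (hy : y ∈ D.Ypp) {x : X} (hx : x ∈ D.PhiNeg) :
    D.pr y x ≤ 0 := by
  have := D.pr_nonneg_of_mem_PhiPos hy hx
  rw [pr_neg_right] at this
  linarith

end Roots

end KM

section RankTwo

/-- Read with `true ↦ sᵢ` and `false ↦ sⱼ`, `altWord k` is the alternating word of length `k`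
ending with `sⱼ`. -/
def altWord : ℕ → List Bool
  | 0 => []
  | k + 1 => decide (k % 2 = 1) :: altWord k

@[simp] lemma altWord_length (k : ℕ) : (altWord k).length = k := by
  induction k with
  | zero => rfl
  | succ k ih => simp [altWord, ih]

lemma altWord_succ (k : ℕ) : altWord (k + 1) = decide (k % 2 = 1) :: altWord k := rfl

lemma altWord_isSuffix {m k : ℕ} (h : m ≤ k) : altWord m <:+ altWord k := by
  induction k with
  | zero => rw [Nat.le_zero.mp h]
  | succ k ih =>
    rcases h.eq_or_lt with rfl | h
    · exact List.suffix_refl _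
    · exact (ih (by omega)).trans (List.suffix_cons _ _)

lemma exists_altWord_eq_append_false {m : ℕ} (hm : 1 ≤ m) :
    ∃ pre : List Bool, pre.length = m - 1 ∧ altWord m = pre ++ [false] := by
  obtain ⟨pre, hpre⟩ := altWord_isSuffix hm
  refine ⟨pre, ?_, hpre.symm⟩
  have := congrArg List.length hpre
  simp only [List.length_append, altWord_length] at this
  omega

lemma eq_altWord_of_isChain (m : List Bool) (hc : m.IsChain (· ≠ ·))
    (hlast : ∀ h : m ≠ [], m.getLast h = false) : m = altWord m.length := by
  induction m with
  | nil => rfl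
  | cons a t ih =>
    cases t with
    | nil =>
      have ha : a = false := by simpa using hlast (List.cons_ne_nil a [])
      simp [altWord, ha]
    | cons b t =>
      obtain ⟨hab, hc⟩ := List.isChain_cons_cons.mp hc
      have ht := ih hc fun h => by simpa [List.getLast_cons h] using hlast (List.cons_ne_nil _ _)
      have hb : b = decide (t.length % 2 = 1) := by
        simpa [altWord] using congrArg List.head? ht
      have ha : a = decide ((t.length + 1) % 2 = 1) := by
        subst hb
        cases a <;> rcases Nat.mod_two_eq_zero_or_one t.length with h | h <;>
          simp_all [Nat.add_mod]
      have ht' : b :: t = altWord (t.length + 1) := by simpa using ht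
      rw [List.length_cons, List.length_cons, altWord_succ, ← ht', ← ha]

/-- `2 × 2` integer matrices as pairs of rows, concrete enough for `decide`. -/
abbrev Mat2 := (ℤ × ℤ) × (ℤ × ℤ)

def Mat2.mul (P R : Mat2) : Mat2 :=
  ((P.1.1 * R.1.1 + P.1.2 * R.2.1, P.1.1 * R.1.2 + P.1.2 * R.2.2),
   (P.2.1 * R.1.1 + P.2.2 * R.2.1, P.2.1 * R.1.2 + P.2.2 * R.2.2))

/-- If `f x = x + M (⟨αᵢ^∨, x⟩, ⟨αⱼ^∨, x⟩) · (αᵢ, αⱼ)` and `g` likewise with `N`, then `f ∘ g`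
has this form with matrix `Mat2.comp a b M N`, where `((2, a), (b, 2))` is the Cartan matrix
of `{i, j}`. -/
def Mat2.comp (a b : ℤ) (M N : Mat2) : Mat2 := N + M + (M.mul ((2, a), (b, 2))).mul N

def wordMat (a b : ℤ) : List Bool → Mat2
  | [] => ((0, 0), (0, 0))
  | t :: l => Mat2.comp a b (if t then ((-1, 0), (0, 0)) else ((0, 0), (0, -1))) (wordMat a b l)

/-- The coordinates, in the basis `αᵢ, αⱼ`, of `αᵢ` moved by the word `altWord k`, where
`a = A i j` and `b = A j i`. -/
def rootCoords (a b : ℤ) : ℕ → ℤ × ℤ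
  | 0 => (1, 0)
  | k + 1 =>
      if k % 2 = 0 then ((rootCoords a b k).1, -(rootCoords a b k).2 - b * (rootCoords a b k).1)
      else (-(rootCoords a b k).1 - a * (rootCoords a b k).2, (rootCoords a b k).2)

lemma rootCoords_nonneg_of_four_le {a b : ℤ} (ha : a ≤ 0) (hb : b ≤ 0) (hab : 4 ≤ a * b)
    (k : ℕ) : 0 ≤ (rootCoords a b k).1 ∧ 0 ≤ (rootCoords a b k).2 := by
  -- the third conjunct is the invariant that rules out a sign change
  suffices ∀ n, 0 ≤ (rootCoords a b n).1 ∧ 0 ≤ (rootCoords a b n).2 ∧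
      if n % 2 = 0 then 0 ≤ 2 * (rootCoords a b n).1 + a * (rootCoords a b n).2
      else 0 ≤ 2 * (rootCoords a b n).2 + b * (rootCoords a b n).1 from
    ⟨(this k).1, (this k).2.1⟩
  intro n
  induction n with
  | zero => simp [rootCoords]
  | succ n ih =>
    obtain ⟨hx, hy, hinv⟩ := ih
    rcases Nat.mod_two_eq_zero_or_one n with hn | hn
    · have hn' : (n + 1) % 2 = 1 := by omega
      simp only [rootCoords, hn, hn', if_true, one_ne_zero, if_false] at hinv ⊢
      refine ⟨hx, by nlinarith, by nlinarith⟩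
    · have hn' : (n + 1) % 2 = 0 := by omega
      simp only [rootCoords, hn, hn', if_true, one_ne_zero, if_false] at hinv ⊢
      refine ⟨by nlinarith, hy, by nlinarith⟩

/-- For `a * b < 4` the Cartan matrix is of type `A₁ × A₁`, `A₂`, `B₂` or `G₂`, with braid
relations of length `2`, `3`, `4` and `6`. -/
lemma exists_braid_of_mul_lt_four {a b : ℤ} (ha : a ≤ 0) (hb : b ≤ 0) (hab : a * b < 4)
    (hab₀ : a = 0 ↔ b = 0) : ∃ m, 1 ≤ m ∧
      wordMat a b (altWord m) = wordMat a b ((altWord m).map not) ∧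
      ∀ k < m, 0 ≤ (rootCoords a b k).1 ∧ 0 ≤ (rootCoords a b k).2 := by
  rcases ha.eq_or_lt with rfl | ha₁
  · obtain rfl := hab₀.mp rfl
    exact ⟨2, by decide⟩
  have hb₁ : b < 0 := hb.lt_of_ne (mt hab₀.mpr ha₁.ne)
  have ha' : -3 ≤ a := by nlinarith
  have hb' : -3 ≤ b := by nlinarith
  interval_cases a <;> interval_cases b <;> norm_num at hab <;>
    first
    | exact ⟨2, by decide⟩
    | exact ⟨3, by decide⟩
    | exact ⟨4, by decide⟩
    | exact ⟨6, by decide⟩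

end RankTwo

namespace KM

variable {I X Y : Type*} [Fintype I] [AddCommGroup X] [AddCommGroup Y] (D : KM I X Y)

section Dihedral

variable (i j : I)

def dihedralWord (m : List Bool) : AddAut X := D.wordProd (m.map (cond · i j))

@[simp] lemma dihedralWord_nil : D.dihedralWord i j [] = 1 := rfl

lemma dihedralWord_cons (t : Bool) (m : List Bool) :
    D.dihedralWord i j (t :: m) = D.sX (cond t i j) * D.dihedralWord i j m := by
  simp [dihedralWord]

lemma dihedralWord_append (m₁ m₂ : List Bool) :
    D.dihedralWord i j (m₁ ++ m₂) = D.dihedralWord i j m₁ * D.dihedralWord i j m₂ := by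
  simp [dihedralWord, wordProd_append]

lemma dihedralWord_concat (m : List Bool) (t : Bool) :
    D.dihedralWord i j (m ++ [t]) = D.dihedralWord i j m * D.sX (cond t i j) := by
  simp [dihedralWord_append, dihedralWord_cons]

lemma autDet_dihedralWord (m : List Bool) : autDet (D.dihedralWord i j m) = (-1) ^ m.length := by
  rw [dihedralWord, autDet_wordProd, List.length_map]

noncomputable def dihedralLength (u : AddAut X) : ℕ :=
  sInf {n | ∃ m : List Bool, m.length = n ∧ D.dihedralWord i j m = u}

variable {i j}

lemma dihedralLength_le {u : AddAut X} {m : List Bool} (h : D.dihedralWord i j m = u) :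
    D.dihedralLength i j u ≤ m.length :=
  Nat.sInf_le ⟨m, rfl, h⟩

lemma exists_dihedral_reduced (m : List Bool) : ∃ m' : List Bool,
    m'.length = D.dihedralLength i j (D.dihedralWord i j m) ∧
      D.dihedralWord i j m' = D.dihedralWord i j m :=
  Nat.sInf_mem (s := {n | ∃ m' : List Bool, m'.length = n ∧ _}) ⟨m.length, m, rfl, rfl⟩

lemma dihedralLength_mul_sX_ne (m : List Bool) (t : Bool) :
    D.dihedralLength i j (D.dihedralWord i j m * D.sX (cond t i j)) ≠
      D.dihedralLength i j (D.dihedralWord i j m) := by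
  intro h
  obtain ⟨m₁, hm₁, hw₁⟩ := D.exists_dihedral_reduced (m ++ [t])
  obtain ⟨m₂, hm₂, hw₂⟩ := D.exists_dihedral_reduced (i := i) (j := j) m
  rw [dihedralWord_concat] at hm₁ hw₁
  have := congrArg autDet (hw₁.trans (congrArg (· * D.sX (cond t i j)) hw₂.symm))
  rw [autDet_mul, D.autDet_sX, D.autDet_dihedralWord, D.autDet_dihedralWord, hm₁, hm₂, h] at this
  have : ((-1 : ℤ)) ^ D.dihedralLength i j (D.dihedralWord i j m) ≠ 0 := pow_ne_zero _ (by norm_num)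
  omega

lemma exists_isChain_dihedralWord_eq (m : List Bool) : ∃ m' : List Bool,
    m'.IsChain (· ≠ ·) ∧ m'.length ≤ m.length ∧ D.dihedralWord i j m' = D.dihedralWord i j m := by
  induction m with
  | nil => exact ⟨[], List.isChain_nil, le_refl _, rfl⟩
  | cons a t ih =>
    obtain ⟨t', hc, hl, hd⟩ := ih
    cases t' with
    | nil =>
      refine ⟨[a], List.isChain_singleton a, by simp, ?_⟩
      rw [dihedralWord_cons, dihedralWord_cons, ← hd]
    | cons b t'' =>
      by_cases hab : a = b
      · subst hab
        refine ⟨t'', hc.tail, by simp at hl ⊢; omega, ?_⟩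
        rw [dihedralWord_cons, ← hd, dihedralWord_cons, ← mul_assoc, sX_mul_self, one_mul]
      · refine ⟨a :: b :: t'', List.isChain_cons_cons.mpr ⟨hab, hc⟩, by simp at hl ⊢; omega, ?_⟩
        rw [dihedralWord_cons, hd, ← dihedralWord_cons]

lemma dihedralWord_eq_altWord {m : List Bool}
    (hm : D.dihedralLength i j (D.dihedralWord i j m) = m.length)
    (hi : m.length < D.dihedralLength i j (D.dihedralWord i j m * D.sX i)) :
    D.dihedralWord i j m = D.dihedralWord i j (altWord m.length) := by
  obtain ⟨m', hc, hl, hd⟩ := D.exists_isChain_dihedralWord_eq m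
  have hl' : m'.length = m.length := le_antisymm hl (hm ▸ D.dihedralLength_le hd)
  suffices hlast : ∀ h : m' ≠ [], m'.getLast h = false by
    rw [← hd, eq_altWord_of_isChain m' hc hlast, hl']
  intro h
  by_contra htrue
  rw [Bool.not_eq_false] at htrue
  have hsplit : D.dihedralWord i j m = D.dihedralWord i j m'.dropLast * D.sX i := by
    rw [← hd, ← List.dropLast_append_getLast h, htrue, dihedralWord_concat, List.dropLast_concat]
    rfl
  have := D.dihedralLength_le (i := i) (j := j) (u := D.dihedralWord i j m * D.sX i)
    (m := m'.dropLast) (by rw [hsplit, mul_sX_mul_sX])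
  rw [List.length_dropLast] at this
  omega

lemma sX_left_apply_span (x y : ℤ) :
    D.sX i (x • D.α i + y • D.α j) = (-x - D.A i j * y) • D.α i + y • D.α j := by
  rw [sX_apply, pr_add_right, pr_zsmul_right, pr_zsmul_right, pr_αv_α, pr_αv_α, D.A_diag]
  match_scalars <;> ring

lemma sX_right_apply_span (x y : ℤ) :
    D.sX j (x • D.α i + y • D.α j) = x • D.α i + (-y - D.A j i * x) • D.α j := by
  rw [sX_apply, pr_add_right, pr_zsmul_right, pr_zsmul_right, pr_αv_α, pr_αv_α, D.A_diag]
  match_scalars <;> ring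

lemma dihedralWord_altWord_α (k : ℕ) :
    D.dihedralWord i j (altWord k) (D.α i) =
      (rootCoords (D.A i j) (D.A j i) k).1 • D.α i +
        (rootCoords (D.A i j) (D.A j i) k).2 • D.α j := by
  induction k with
  | zero => simp [altWord, rootCoords]
  | succ k ih =>
    rw [altWord_succ, dihedralWord_cons, AddAut.oldMul_apply, ih]
    rcases Nat.mod_two_eq_zero_or_one k with hk | hk
    · simp [hk, D.sX_right_apply_span, rootCoords]
    · simp [hk, D.sX_left_apply_span, rootCoords]

variable (i j)

def mat2Act (M : Mat2) (x : X) : X :=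
  x + (M.1.1 * D.pr (D.αv i) x + M.1.2 * D.pr (D.αv j) x) • D.α i
    + (M.2.1 * D.pr (D.αv i) x + M.2.2 * D.pr (D.αv j) x) • D.α j

lemma mat2Act_mat2Act (M N : Mat2) (x : X) :
    D.mat2Act i j M (D.mat2Act i j N x) = D.mat2Act i j (Mat2.comp (D.A i j) (D.A j i) M N) x := by
  simp only [mat2Act, Mat2.comp, Mat2.mul, Prod.fst_add, Prod.snd_add, pr_add_right,
    pr_zsmul_right, pr_αv_α, D.A_diag]
  match_scalars <;> ring

lemma dihedralWord_apply (m : List Bool) (x : X) :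
    D.dihedralWord i j m x = D.mat2Act i j (wordMat (D.A i j) (D.A j i) m) x := by
  induction m with
  | nil => simp [mat2Act, wordMat]
  | cons t l ih =>
    rw [dihedralWord_cons, AddAut.oldMul_apply, ih, wordMat, ← mat2Act_mat2Act]
    cases t
    · simp only [cond_false, sX_apply, mat2Act, Bool.false_eq_true, if_false]
      match_scalars <;> ring
    · simp only [cond_true, sX_apply, mat2Act, if_true]
      match_scalars <;> ring

variable {i j}

lemma dihedralWord_eq_of_wordMat_eq {m m' : List Bool}
    (h : wordMat (D.A i j) (D.A j i) m = wordMat (D.A i j) (D.A j i) m') :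
    D.dihedralWord i j m = D.dihedralWord i j m' := by
  ext x
  rw [dihedralWord_apply, dihedralWord_apply, h]

/-- The braid relation turns the last `m` letters into an alternating word ending with `sᵢ`. -/
lemma dihedralLength_altWord_mul_sX_lt {m k : ℕ} (hm : 1 ≤ m)
    (hbraid : D.dihedralWord i j (altWord m) = D.dihedralWord i j ((altWord m).map not))
    (hk : m ≤ k) : D.dihedralLength i j (D.dihedralWord i j (altWord k) * D.sX i) < k := by
  obtain ⟨pre, hpre⟩ := altWord_isSuffix hk
  obtain ⟨pre₂, hpre₂, hm'⟩ := exists_altWord_eq_append_false hm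
  have hsplit : D.dihedralWord i j (altWord k) * D.sX i =
      D.dihedralWord i j (pre ++ pre₂.map not) := by
    rw [← hpre, dihedralWord_append, hbraid, hm', List.map_append, dihedralWord_append,
      dihedralWord_append]
    simp [dihedralWord_cons, mul_assoc]
  have hlen := congrArg List.length hpre
  simp only [List.length_append, altWord_length] at hlen
  have := D.dihedralLength_le hsplit.symm
  simp only [List.length_append, List.length_map] at this
  omega

lemma rootCoords_nonneg (hij : i ≠ j) {k : ℕ}
    (hk : k < D.dihedralLength i j (D.dihedralWord i j (altWord k) * D.sX i)) :
    0 ≤ (rootCoords (D.A i j) (D.A j i) k).1 ∧ 0 ≤ (rootCoords (D.A i j) (D.A j i) k).2 := by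
  have ha := D.A_offdiag i j hij
  have hb := D.A_offdiag j i hij.symm
  by_cases h4 : 4 ≤ D.A i j * D.A j i
  · exact rootCoords_nonneg_of_four_le ha hb h4 k
  obtain ⟨m, hm, hbraid, hcoords⟩ := exists_braid_of_mul_lt_four ha hb (not_le.mp h4)
    ⟨D.A_zero_iff i j, D.A_zero_iff j i⟩
  refine hcoords k (not_le.mp fun hmk => ?_)
  have := D.dihedralLength_altWord_mul_sX_lt hm (D.dihedralWord_eq_of_wordMat_eq hbraid) hmk
  omega

end Dihedral

section Dichotomy

lemma wordLength_mul_dihedralWord_le {v : AddAut X} (hv : v ∈ D.Wg) (i j : I) (m : List Bool) :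
    D.wordLength (v * D.dihedralWord i j m) ≤
      D.wordLength v + D.dihedralLength i j (D.dihedralWord i j m) := by
  obtain ⟨l, hl, rfl⟩ := D.exists_reduced_word hv
  obtain ⟨m', hm', hw'⟩ := D.exists_dihedral_reduced (i := i) (j := j) m
  rw [← hl, ← hm', ← hw']
  simpa [dihedralWord] using D.wordLength_le (wordProd_append D l (m'.map (cond · i j)))

/-- Strip `sᵢ` or `sⱼ` off the right of `w` as long as this shortens it. -/
lemma exists_eq_mul_dihedralWord (i j : I) (n : ℕ) : ∀ w ∈ D.Wg, D.wordLength w = n →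
    (D.wordLength (w * D.sX i) < n ∨ D.wordLength (w * D.sX j) < n) →
    ∃ v ∈ D.Wg, ∃ m : List Bool, m ≠ [] ∧ w = v * D.dihedralWord i j m ∧
      D.wordLength v + m.length = n ∧ D.wordLength v < D.wordLength (v * D.sX i) ∧
      D.wordLength v < D.wordLength (v * D.sX j) := by
  induction n with
  | zero => intro w _ _ h; omega
  | succ n ih =>
    intro w hw hn hdec
    obtain ⟨t, ht⟩ : ∃ t : Bool, D.wordLength (w * D.sX (cond t i j)) < n + 1 :=
      hdec.elim (⟨true, ·⟩) (⟨false, ·⟩)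
    have hw₁ : w * D.sX (cond t i j) ∈ D.Wg := mul_mem hw (D.sX_mem _)
    have hn₁ : D.wordLength (w * D.sX (cond t i j)) = n := by
      have := D.wordLength_le_mul_sX hw (cond t i j)
      omega
    have hw_eq : w = w * D.sX (cond t i j) * D.dihedralWord i j [t] := by
      rw [dihedralWord_cons, dihedralWord_nil, mul_one, mul_sX_mul_sX]
    by_cases hstop : n < D.wordLength (w * D.sX (cond t i j) * D.sX i) ∧
        n < D.wordLength (w * D.sX (cond t i j) * D.sX j)
    · exact ⟨_, hw₁, [t], List.cons_ne_nil _ _, hw_eq, by simp [hn₁], hn₁ ▸ hstop.1, hn₁ ▸ hstop.2⟩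
    have hdec₁ : D.wordLength (w * D.sX (cond t i j) * D.sX i) < n ∨
        D.wordLength (w * D.sX (cond t i j) * D.sX j) < n := by
      have := D.wordLength_mul_sX_ne hw₁ i
      have := D.wordLength_mul_sX_ne hw₁ j
      omega
    obtain ⟨v, hv, m, -, hsplit, hlen, hvi, hvj⟩ := ih _ hw₁ hn₁ hdec₁
    refine ⟨v, hv, m ++ [t], by simp, ?_, by simp; omega, hvi, hvj⟩
    rw [hw_eq, hsplit, dihedralWord_append, mul_assoc]

/-- Write `w = v u` with `u ∈ ⟨sᵢ, sⱼ⟩`, where `ℓ(w sⱼ) < ℓ(w)`, and `v` lengthened by both `sᵢ`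
and `sⱼ`; then `w αᵢ = v (u αᵢ)` is a nonnegative combination of `v αᵢ` and `v αⱼ`, which are
positive by induction. -/
theorem apply_α_mem_PhiPos {w : AddAut X} (hw : w ∈ D.Wg) {i : I}
    (h : D.wordLength w < D.wordLength (w * D.sX i)) : w (D.α i) ∈ D.PhiPos := by
  induction hn : D.wordLength w using Nat.strong_induction_on generalizing w i with
  | _ n ih =>
    rcases eq_or_ne w 1 with rfl | hne
    · exact D.α_mem_PhiPos i
    have hroot := D.apply_mem_Phi hw (D.α_mem_Phi i)
    obtain ⟨j, hj⟩ := D.exists_wordLength_mul_sX_lt hw hne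
    have hij : i ≠ j := by rintro rfl; omega
    obtain ⟨v, hv, m, hm, rfl, hlen, hvi, hvj⟩ :=
      D.exists_eq_mul_dihedralWord i j n w hw hn (Or.inr (hn ▸ hj))
    have hvn : D.wordLength v < n := by
      have := List.length_pos_iff.mpr hm
      omega
    have hred : D.dihedralLength i j (D.dihedralWord i j m) = m.length := by
      have := D.wordLength_mul_dihedralWord_le hv i j m
      exact le_antisymm (D.dihedralLength_le rfl) (by omega)
    have hred_i : m.length < D.dihedralLength i j (D.dihedralWord i j m * D.sX i) := by
      have hne := D.dihedralLength_mul_sX_ne (i := i) (j := j) m true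
      have hle := D.wordLength_mul_dihedralWord_le hv i j (m ++ [true])
      simp only [cond_true, dihedralWord_concat, ← mul_assoc] at hne hle
      omega
    have halt := D.dihedralWord_eq_altWord hred hred_i
    have hcoords := D.rootCoords_nonneg hij (k := m.length) (halt ▸ hred_i)
    refine D.mem_PhiPos_of_eq_add hroot (ih _ hvn hv hvi rfl) (ih _ hvn hv hvj rfl)
      hcoords.1 hcoords.2 ?_
    rw [AddAut.oldMul_apply, halt, dihedralWord_altWord_α, map_add, map_zsmul, map_zsmul]

lemma mem_PhiPos_or_mem_PhiNeg {x : X} (hx : x ∈ D.Phi) : x ∈ D.PhiPos ∨ x ∈ D.PhiNeg := by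
  obtain ⟨w, hw, i, rfl⟩ := D.mem_Phi_iff.mp hx
  rcases (D.wordLength_mul_sX_ne hw i).lt_or_gt with h | h
  · right
    have hwi : w * D.sX i * D.sX i = w := D.mul_sX_mul_sX w i
    have := D.apply_α_mem_PhiPos (mul_mem hw (D.sX_mem i)) (i := i) (by rwa [hwi])
    rwa [AddAut.oldMul_apply, sX_α_self, map_neg] at this
  · exact Or.inl (D.apply_α_mem_PhiPos hw h)

end Dichotomy

section Inversions

lemma eq_α_of_sX_apply_mem_PhiNeg {x : X} {t : I} (hx : x ∈ D.PhiPos)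
    (hneg : D.sX t x ∈ D.PhiNeg) : x = D.α t := by
  classical
  obtain ⟨hxΦ, c, hc, hxc⟩ := D.mem_PhiPos_iff.mp hx
  obtain ⟨-, e, he, hxe⟩ := D.mem_PhiPos_iff.mp hneg
  have hsum : ∑ s, (c s - if s = t then D.pr (D.αv t) x else 0) • D.α s =
      ∑ s, (-e s) • D.α s := by
    simp only [sub_smul, neg_smul, Finset.sum_sub_distrib, Finset.sum_neg_distrib, ite_smul,
      zero_smul, Finset.sum_ite_eq', Finset.mem_univ, if_true, ← hxc, ← hxe, neg_neg]
    rfl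
  have hct : ∀ s ≠ t, c s = 0 := fun s hs => by
    have := congrFun (D.coeffs_eq_of_sum_eq hsum) s
    simp only [if_neg hs, sub_zero] at this
    linarith [hc s, he s]
  have hxt : x = c t • D.α t := by
    rw [hxc, Finset.sum_eq_single t (fun s _ hs => by rw [hct s hs, zero_smul]) (by simp)]
  -- `α t₀ = c t • w⁻¹ (α t)`, so `c t` divides the coefficient `1` of `α t₀`
  obtain ⟨w, hw, t₀, hxw⟩ := D.mem_Phi_iff.mp hxΦ
  obtain ⟨d, hd⟩ := D.exists_coeffs_of_mem_Phi (D.apply_mem_Phi (inv_mem hw) (D.α_mem_Phi t))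
  have h₁ : ∑ s, (if s = t₀ then (1 : ℤ) else 0) • D.α s = ∑ s, (c t * d s) • D.α s := by
    have : D.α t₀ = c t • w⁻¹ (D.α t) := by rw [← map_zsmul, ← hxt, hxw, AddAut.oldApply_inv_self]
    simp only [ite_smul, one_smul, zero_smul, Finset.sum_ite_eq', Finset.mem_univ, if_true, this,
      hd, Finset.smul_sum, smul_smul]
  have h₂ := congrFun (D.coeffs_eq_of_sum_eq h₁) t₀
  simp only [if_true] at h₂
  rw [hxt, Int.eq_one_of_mul_eq_one_right (hc t) h₂.symm, one_smul]

lemma invSet_wordProd_finite (l : List I) : (D.invSet (D.wordProd l)).Finite := by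
  induction l with
  | nil =>
    refine Set.finite_empty.subset fun a ha => ?_
    exact D.notMem_PhiNeg_of_mem_PhiPos ha.1 ha.2
  | cons t l ih =>
    refine (ih.union (Set.finite_singleton ((D.wordProd l)⁻¹ (D.α t)))).subset ?_
    rintro a ⟨ha, hneg⟩
    rw [wordProd_cons, AddAut.oldMul_apply] at hneg
    rcases D.mem_PhiPos_or_mem_PhiNeg (D.apply_mem_Phi (D.wordProd_mem l) ha.1) with hpos | hneg'
    · right
      rw [Set.mem_singleton_iff, ← D.eq_α_of_sX_apply_mem_PhiNeg hpos hneg,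
        AddAut.oldApply_inv_self]
    · exact Or.inl ⟨ha, hneg'⟩

lemma invSet_finite {w : AddAut X} (hw : w ∈ D.Wg) : (D.invSet w).Finite := by
  obtain ⟨l, rfl⟩ := D.mem_Wg_iff.mp hw
  exact D.invSet_wordProd_finite l

lemma invSet_mul_of_disjoint {v u : AddAut X} (hv : v ∈ D.Wg) (hu : u ∈ D.Wg)
    (hdisj : Disjoint (D.invSet u⁻¹) (D.invSet v)) :
    D.invSet (v * u) = D.invSet u ∪ (fun x => u⁻¹ x) '' D.invSet v := by
  ext a
  constructor
  · rintro ⟨ha, hneg⟩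
    rcases D.mem_PhiPos_or_mem_PhiNeg (D.apply_mem_Phi hu ha.1) with hua | hua
    · exact Or.inr ⟨u a, ⟨hua, hneg⟩, AddAut.oldApply_inv_self u a⟩
    · exact Or.inl ⟨ha, hua⟩
  · rintro (⟨ha, hua⟩ | ⟨g, hg, rfl⟩)
    · refine ⟨ha, (D.mem_PhiPos_or_mem_PhiNeg (D.apply_mem_Phi (mul_mem hv hu) ha.1)).resolve_left
        fun hvua => ?_⟩
      -- otherwise `-(u a)` would lie in both inversion sets
      refine hdisj.notMem_of_mem_left (a := -(u a)) ⟨hua, ?_⟩ ⟨hua, ?_⟩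
      · rwa [map_neg, AddAut.oldApply_inv_self, mem_PhiNeg_iff, neg_neg]
      · rwa [map_neg, mem_PhiNeg_iff, neg_neg]
    · refine ⟨(D.mem_PhiPos_or_mem_PhiNeg (D.apply_mem_Phi (inv_mem hu) hg.1.1)).resolve_right
        fun hneg => hdisj.notMem_of_mem_right hg ⟨hg.1, hneg⟩, ?_⟩
      rw [AddAut.oldMul_apply, AddAut.oldInv_apply_self]
      exact hg.2

lemma disjoint_invSet_image_invSet (u v : AddAut X) :
    Disjoint (D.invSet u) ((fun x => u⁻¹ x) '' D.invSet v) := by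
  rw [Set.disjoint_right]
  rintro _ ⟨g, hg, rfl⟩ hug
  have := hug.2
  rw [AddAut.oldInv_apply_self] at this
  exact D.notMem_PhiNeg_of_mem_PhiPos hg.1 this

lemma len_mul_of_disjoint {v u : AddAut X} (hv : v ∈ D.Wg) (hu : u ∈ D.Wg)
    (hdisj : Disjoint (D.invSet u⁻¹) (D.invSet v)) : D.len (v * u) = D.len v + D.len u := by
  rw [len, D.invSet_mul_of_disjoint hv hu hdisj,
    Set.ncard_union_eq (D.disjoint_invSet_image_invSet u v) (D.invSet_finite hu)
      ((D.invSet_finite hv).image _),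
    Set.ncard_image_of_injective _ u⁻¹.injective, len, len, add_comm]

end Inversions

section Reflections

lemma exists_coroot_srefl_eq {b : X} (hb : b ∈ D.Phi) :
    ∃ w ∈ D.Wg, ∃ t : I, b = w (D.α t) ∧
      D.coroot b = D.actY w (D.αv t) ∧ D.srefl b = w * D.sX t * w⁻¹ := by
  have h : ∃ p : AddAut X × I, p.1 ∈ D.Wg ∧ b = p.1 (D.α p.2) := hb
  exact ⟨h.choose.1, h.choose_spec.1, h.choose.2, h.choose_spec.2,
    by rw [coroot, dif_pos h], by rw [srefl, dif_pos h]⟩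

lemma srefl_mem {b : X} (hb : b ∈ D.Phi) : D.srefl b ∈ D.Wg := by
  obtain ⟨w, hw, t, -, -, hs⟩ := D.exists_coroot_srefl_eq hb
  rw [hs]
  exact mul_mem (mul_mem hw (D.sX_mem t)) (inv_mem hw)

lemma srefl_apply {b : X} (hb : b ∈ D.Phi) (x : X) :
    D.srefl b x = x - D.pr (D.coroot b) x • b := by
  obtain ⟨w, -, t, rfl, hc, hs⟩ := D.exists_coroot_srefl_eq hb
  rw [hs, hc, AddAut.oldMul_apply, AddAut.oldMul_apply, sX_apply, map_sub, map_zsmul,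
    AddAut.oldInv_apply_self, pr_actY]

lemma pr_coroot_pos_of_mem_invSet_srefl {b : X} (hb : b ∈ D.PhiPos) {g : X}
    (hg : g ∈ D.invSet (D.srefl b)) : 0 < D.pr (D.coroot b) g := by
  by_contra! hle
  refine D.notMem_PhiNeg_of_mem_PhiPos ?_ hg.2
  refine D.mem_PhiPos_of_eq_add (D.apply_mem_Phi (D.srefl_mem hb.1) hg.1.1) hg.1 hb
    zero_le_one (neg_nonneg.mpr hle) ?_
  rw [D.srefl_apply hb.1, one_smul, neg_smul, sub_eq_add_neg]

end Reflections

end KM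

/-- if `λ ∈ Y^{++}`, `β^∨` is a positive coroot and `λ+β^∨` lies in the
vectorial chamber of `u` (i.e. `u⁻¹(λ+β^∨) ∈ Y^{++}`), then `ℓ(s_β u) = ℓ(s_β) + ℓ(u)`. -/
theorem statement4 {I X Y : Type*} [Fintype I] [AddCommGroup X] [AddCommGroup Y]
    (D : KM I X Y)
    (lam : Y) (hlam : lam ∈ D.Ypp) (b : X) (hb : b ∈ D.PhiPos)
    (u : AddAut X) (hu : u ∈ D.Wg)
    (hch : D.actY (u⁻¹) (lam + D.coroot b) ∈ D.Ypp) :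
    D.len (D.srefl b * u) = D.len (D.srefl b) + D.len u := by
  refine D.len_mul_of_disjoint (D.srefl_mem hb.1) hu (Set.disjoint_left.mpr fun γ hγu hγs => ?_)
  have hlam_γ : 0 ≤ D.pr lam γ := D.pr_nonneg_of_mem_PhiPos hlam hγu.1
  have hcoroot_γ : 0 < D.pr (D.coroot b) γ := D.pr_coroot_pos_of_mem_invSet_srefl hb hγs
  have hsum_γ : D.pr (lam + D.coroot b) γ ≤ 0 := by
    simpa [KM.pr_actY] using D.pr_nonpos_of_mem_PhiNeg hch hγu.2
  rw [D.pr_add_left] at hsum_γ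
  omega
end

section
/- Let W be a Coxeter group and let v₁, v₂, w ∈ W be such that v₂ is not on a minimal gallery from v₁ to w, i.e. ℓ(v₁⁻¹w) < ℓ(v₁⁻¹v₂) + ℓ(v₂⁻¹w). Then there exists a reflection r ∈ W such that ℓ(v₁⁻¹ r w) > ℓ(v₁⁻¹ w) and ℓ(v₂⁻¹ r w) < ℓ(v₂⁻¹ w). -/
namespace Statement18Aux

open CoxeterSystem List

open scoped Classical

section Generic

variable {G : Type*} [Group G]

/-- The basic involution on `G × ZMod 2` attached to an involution `a` of a group `G`. -/
noncomputable def emap (a : G) : Function.End (G × ZMod 2) :=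
  fun p => (a * p.1 * a, p.2 + if p.1 = a then 1 else 0)

lemma sum_range_add' (f : ℕ → ZMod 2) (m k : ℕ) :
    ∑ n ∈ Finset.range (m + k), f n
      = ∑ n ∈ Finset.range m, f n + ∑ n ∈ Finset.range k, f (m + n) := by
  induction k with
  | zero => simp
  | succ k ih =>
      rw [← Nat.add_assoc, Finset.sum_range_succ, ih, Finset.sum_range_succ, add_assoc]

lemma emap_pow {a b : G} (ha : a * a = 1) (hb : b * b = 1) (k : ℕ) (p : G × ZMod 2) :
    ((emap a * emap b) ^ k) p =
      ((a * b) ^ k * p.1 * ((a * b) ^ k)⁻¹,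
        p.2 + ∑ n ∈ Finset.range (2 * k),
          if p.1 = b * (a * b) ^ n then 1 else 0) := by
  have hainv : a⁻¹ = a := inv_eq_of_mul_eq_one_right ha
  have hbinv : b⁻¹ = b := inv_eq_of_mul_eq_one_right hb
  have hzinv : (a * b)⁻¹ = b * a := by rw [mul_inv_rev, hainv, hbinv]
  have hzb : (a * b)⁻¹ * b = b * (a * b) := by rw [hzinv, mul_assoc]
  induction k generalizing p with
  | zero =>
      rw [pow_zero]
      show p = _
      simp
  | succ k ih =>
      have hstep : ((emap a * emap b) ^ (k + 1)) p
          = ((emap a * emap b) ^ k) ((emap a * emap b) p) := by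
        rw [pow_succ]; rfl
      have hone : (emap a * emap b) p
          = ((a * b) * p.1 * (a * b)⁻¹,
              p.2 + ((if p.1 = b * (a * b) ^ 0 then (1 : ZMod 2) else 0)
                + if p.1 = b * (a * b) ^ 1 then 1 else 0)) := by
        show emap a (emap b p) = _
        simp only [emap]
        refine Prod.ext ?_ ?_
        · show a * (b * p.1 * b) * a = (a * b) * p.1 * (a * b)⁻¹
          rw [hzinv]
          simp [mul_assoc]
        · show p.2 + (if p.1 = b then 1 else 0) + (if b * p.1 * b = a then 1 else 0) = _
          have h1 : (b * p.1 * b = a) ↔ (p.1 = b * (a * b) ^ 1) := by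
            rw [pow_one, ← mul_assoc]
            constructor
            · intro h
              have : p.1 = b⁻¹ * a * b⁻¹ := by rw [← h]; group
              rw [this, hbinv]
            · intro h
              rw [h, ← mul_assoc, ← mul_assoc, hb, one_mul, mul_assoc, hb, mul_one]
          rw [pow_zero, mul_one, if_congr h1 rfl rfl, add_assoc]
      rw [hstep, ih, hone]
      refine Prod.ext ?_ ?_
      · show (a*b) ^ k * ((a*b) * p.1 * (a*b)⁻¹) * ((a*b) ^ k)⁻¹
            = (a*b) ^ (k+1) * p.1 * ((a*b) ^ (k+1))⁻¹
        generalize (a * b) = z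
        rw [pow_succ']
        group
      · show p.2 + ((if p.1 = b * (a*b) ^ 0 then (1 : ZMod 2) else 0)
                + if p.1 = b * (a*b) ^ 1 then 1 else 0)
              + ∑ n ∈ Finset.range (2 * k),
                  (if (a*b) * p.1 * (a*b)⁻¹ = b * (a*b) ^ n then (1 : ZMod 2) else 0)
            = p.2 + ∑ n ∈ Finset.range (2 * (k+1)),
                (if p.1 = b * (a*b) ^ n then (1 : ZMod 2) else 0)
        have hiff : ∀ n : ℕ,
            ((a*b) * p.1 * (a*b)⁻¹ = b * (a*b) ^ n) ↔ (p.1 = b * (a*b) ^ (n + 2)) := by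
          intro n
          have hzb' := hzb
          revert hzb'
          generalize (a * b) = z
          intro hzb'
          have e1 : z⁻¹ * (b * z ^ n) * z = b * z ^ (n + 2) := by
            rw [← mul_assoc, hzb', mul_assoc b z, ← pow_succ', mul_assoc, ← pow_succ]
          rw [← e1]
          constructor
          · intro h; rw [← h]; group
          · intro h; rw [h]; group
        have hsum : ∑ n ∈ Finset.range (2 * k),
              (if (a*b) * p.1 * (a*b)⁻¹ = b * (a*b) ^ n then (1 : ZMod 2) else 0)
            = ∑ n ∈ Finset.range (2 * k),
              (if p.1 = b * (a*b) ^ (n + 2) then (1 : ZMod 2) else 0) :=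
          Finset.sum_congr rfl fun n _ => if_congr (hiff n) rfl rfl
        rw [hsum, show 2 * (k + 1) = 2 * k + 1 + 1 by ring,
          Finset.sum_range_succ' (fun n => if p.1 = b * (a*b) ^ n then (1 : ZMod 2) else 0),
          Finset.sum_range_succ'
            (fun n => if p.1 = b * (a*b) ^ (n + 1) then (1 : ZMod 2) else 0)]
        norm_num
        abel

lemma emap_braid {a b : G} (ha : a * a = 1) (hb : b * b = 1) {m : ℕ}
    (hm : (a * b) ^ m = 1) : (emap a * emap b) ^ m = 1 := by
  funext p
  rw [emap_pow ha hb m p, hm]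
  have hsum : ∑ n ∈ Finset.range (2 * m),
      (if p.1 = b * (a * b) ^ n then (1 : ZMod 2) else 0) = 0 := by
    rw [two_mul, sum_range_add']
    have heq : ∑ n ∈ Finset.range m,
        (if p.1 = b * (a * b) ^ (m + n) then (1 : ZMod 2) else 0)
        = ∑ n ∈ Finset.range m,
          (if p.1 = b * (a * b) ^ n then (1 : ZMod 2) else 0) :=
      Finset.sum_congr rfl fun n _ => by rw [pow_add, hm, one_mul]
    rw [heq, ← Finset.sum_add_distrib]
    refine Finset.sum_eq_zero fun n _ => ?_
    split_ifs <;> decide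
  rw [hsum]
  show (1 * p.1 * 1⁻¹, p.2 + 0) = p
  simp

end Generic

variable {B W : Type*} [Group W] {M : CoxeterMatrix B} (cs : CoxeterSystem M W)

lemma dmap_liftable : M.IsLiftable (fun i => emap (cs.simple i)) := fun i i' =>
  emap_braid (cs.simple_mul_simple_self i) (cs.simple_mul_simple_self i')
    (cs.simple_mul_simple_pow i i')

/-- The reflection cocycle homomorphism. -/
noncomputable def Phi : W →* Function.End (W × ZMod 2) :=
  cs.lift ⟨fun i => emap (cs.simple i), dmap_liftable cs⟩

lemma Phi_simple (i : B) : Phi cs (cs.simple i) = emap (cs.simple i) :=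
  cs.lift_apply_simple (dmap_liftable cs) i

/-- `nu cs w t = 1` iff `t` is a "right inversion" of `w` in the cocycle sense. -/
noncomputable def nu (w t : W) : ZMod 2 := (Phi cs w (t, 0)).2

lemma nu_one (t : W) : nu cs 1 t = 0 := by
  show (Phi cs 1 (t, 0)).2 = 0
  rw [map_one]
  rfl

lemma Phi_apply (w t : W) (ε : ZMod 2) :
    Phi cs w (t, ε) = (w * t * w⁻¹, ε + nu cs w t) := by
  obtain ⟨ω, rfl⟩ := cs.wordProd_surjective w
  induction ω generalizing t ε with
  | nil =>
      rw [wordProd_nil, map_one, nu_one, add_zero]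
      show (t, ε) = _
      simp
  | cons i ω ih =>
      have key : ∀ δ : ZMod 2, Phi cs (cs.wordProd (i :: ω)) (t, δ)
          = (cs.simple i * (cs.wordProd ω * t * (cs.wordProd ω)⁻¹) * cs.simple i,
              δ + nu cs (cs.wordProd ω) t
                + if cs.wordProd ω * t * (cs.wordProd ω)⁻¹ = cs.simple i then 1 else 0) := by
        intro δ
        rw [cs.wordProd_cons, map_mul]
        show Phi cs (cs.simple i) (Phi cs (cs.wordProd ω) (t, δ)) = _
        rw [ih t δ, Phi_simple]
        rfl
      rw [key ε]
      have key0 := key 0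
      refine Prod.ext ?_ ?_
      · show cs.simple i * (cs.wordProd ω * t * (cs.wordProd ω)⁻¹) * cs.simple i
          = cs.wordProd (i :: ω) * t * (cs.wordProd (i :: ω))⁻¹
        rw [cs.wordProd_cons, mul_inv_rev, cs.inv_simple]
        group
      · show ε + nu cs (cs.wordProd ω) t
            + (if cs.wordProd ω * t * (cs.wordProd ω)⁻¹ = cs.simple i then 1 else 0)
          = ε + nu cs (cs.wordProd (i :: ω)) t
        have hnu : nu cs (cs.wordProd (i :: ω)) t
            = (Phi cs (cs.wordProd (i :: ω)) (t, 0)).2 := rfl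
        rw [hnu, key0]
        show _ = ε + (0 + nu cs (cs.wordProd ω) t + _)
        abel

lemma nu_mul (u v t : W) : nu cs (u * v) t = nu cs v t + nu cs u (v * t * v⁻¹) := by
  show (Phi cs (u * v) (t, 0)).2 = _
  rw [map_mul]
  show (Phi cs u (Phi cs v (t, 0))).2 = _
  rw [Phi_apply cs v t 0, Phi_apply cs u (v * t * v⁻¹) (0 + nu cs v t)]
  show 0 + nu cs v t + nu cs u (v * t * v⁻¹) = _
  abel

lemma nu_simple (i : B) (t : W) : nu cs (cs.simple i) t = if t = cs.simple i then 1 else 0 := by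
  show (Phi cs (cs.simple i) (t, 0)).2 = _
  rw [Phi_simple]
  show 0 + (if t = cs.simple i then 1 else 0) = _
  rw [zero_add]

lemma count_ris (ω : List B) (t : W) :
    ((cs.rightInvSeq ω).count t : ZMod 2) = nu cs (cs.wordProd ω) t := by
  induction ω with
  | nil => simp [nu_one]
  | cons i ω ih =>
      have hris : cs.rightInvSeq (i :: ω)
          = ((cs.wordProd ω)⁻¹ * cs.simple i * cs.wordProd ω) :: cs.rightInvSeq ω := rfl
      have hiff : ((cs.wordProd ω)⁻¹ * cs.simple i * cs.wordProd ω = t)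
          ↔ (cs.wordProd ω * t * (cs.wordProd ω)⁻¹ = cs.simple i) := by
        constructor
        · intro h; rw [← h]; group
        · intro h; rw [← h]; group
      rw [hris, cs.wordProd_cons, nu_mul, nu_simple cs i, List.count_cons, ← ih]
      by_cases hc : cs.wordProd ω * t * (cs.wordProd ω)⁻¹ = cs.simple i
      · rw [if_pos hc]
        have hbe : ((cs.wordProd ω)⁻¹ * cs.simple i * cs.wordProd ω == t) = true :=
          beq_iff_eq.mpr (hiff.mpr hc)
        rw [hbe]
        simp
      · rw [if_neg hc]
        have hbe : ((cs.wordProd ω)⁻¹ * cs.simple i * cs.wordProd ω == t) = false := by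
          rw [beq_eq_false_iff_ne]
          exact fun h => hc (hiff.mp h)
        rw [hbe]
        simp

lemma isRightInversion_of_nu_eq_one {w t : W} (h : nu cs w t = 1) :
    cs.IsRightInversion w t := by
  obtain ⟨ω, hred, hw⟩ := cs.exists_reduced_word' w
  subst hw
  have hcount : ((cs.rightInvSeq ω).count t : ZMod 2) = 1 := by rw [count_ris]; exact h
  have hmem : t ∈ cs.rightInvSeq ω := by
    by_contra hmem
    rw [List.count_eq_zero_of_not_mem hmem] at hcount
    exact absurd hcount (by decide)
  exact cs.isRightInversion_of_mem_rightInvSeq hred hmem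

lemma nu_self {t : W} (ht : cs.IsReflection t) : nu cs t t = 1 := by
  obtain ⟨p, i, rfl⟩ := ht
  have e1 : p * cs.simple i * p⁻¹ = p * (cs.simple i * p⁻¹) := by rw [mul_assoc]
  rw [e1, nu_mul]
  have e4 : p⁻¹ * (p * (cs.simple i * p⁻¹)) * p⁻¹⁻¹ = cs.simple i := by
    simp [mul_assoc]
  have e2 : (cs.simple i * p⁻¹) * (p * (cs.simple i * p⁻¹)) * (cs.simple i * p⁻¹)⁻¹
      = cs.simple i := by
    rw [mul_inv_rev, cs.inv_simple, inv_inv]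
    simp [mul_assoc, cs.simple_mul_simple_self]
  rw [e2]
  have e3 : nu cs (cs.simple i * p⁻¹) (p * (cs.simple i * p⁻¹))
      = nu cs p⁻¹ (p * (cs.simple i * p⁻¹)) + 1 := by
    rw [nu_mul, e4, nu_simple, if_pos rfl]
  rw [e3]
  have e5 : nu cs p⁻¹ (p * (cs.simple i * p⁻¹)) + nu cs p (cs.simple i) = 0 := by
    have h0 : nu cs (p * p⁻¹) (p * (cs.simple i * p⁻¹)) = 0 := by
      rw [mul_inv_cancel, nu_one]
    rw [nu_mul, e4] at h0
    exact h0
  rw [add_right_comm, e5, zero_add]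

lemma nu_eq_one_of_lt {w t : W} (ht : cs.IsReflection t)
    (h : cs.length (w * t) < cs.length w) : nu cs w t = 1 := by
  have hwt : nu cs (w * t) t = 0 := by
    rcases (by decide : ∀ c : ZMod 2, c = 0 ∨ c = 1) (nu cs (w * t) t) with hc | hc
    · exact hc
    · exfalso
      have := (isRightInversion_of_nu_eq_one cs hc).2
      rw [mul_assoc, ht.mul_self, mul_one] at this
      omega
  have hw : w = (w * t) * t := by rw [mul_assoc, ht.mul_self, mul_one]
  nth_rewrite 1 [hw]
  rw [nu_mul]
  have htt : t * t * t⁻¹ = t := by rw [ht.mul_self, one_mul, ht.inv]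
  rw [htt, nu_self cs ht, hwt, add_zero]

lemma nu_eq_zero_iff {w t : W} (ht : cs.IsReflection t) :
    nu cs w t = 0 ↔ cs.length w < cs.length (w * t) := by
  constructor
  · intro h
    have hne := ht.length_mul_left_ne w
    have hnlt : ¬ (cs.length (w * t) < cs.length w) := fun hlt => by
      rw [nu_eq_one_of_lt cs ht hlt] at h
      exact absurd h (by decide)
    omega
  · intro h
    rcases (by decide : ∀ c : ZMod 2, c = 0 ∨ c = 1) (nu cs w t) with hc | hc
    · exact hc
    · have := (isRightInversion_of_nu_eq_one cs hc).2
      omega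

lemma mem_ris_iff_nu {ω : List B} (hred : cs.IsReduced ω) (t : W) :
    t ∈ cs.rightInvSeq ω ↔ nu cs (cs.wordProd ω) t = 1 := by
  rw [← count_ris]
  constructor
  · intro hmem
    have hle := List.nodup_iff_count_le_one.mp (hred.nodup_rightInvSeq) t
    have hpos : 0 < (cs.rightInvSeq ω).count t := List.count_pos_iff.mpr hmem
    have hone : (cs.rightInvSeq ω).count t = 1 := by omega
    rw [hone]
    rfl
  · intro h
    by_contra hmem
    rw [List.count_eq_zero_of_not_mem hmem] at h
    exact absurd h (by decide)

end Statement18Aux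

open Statement18Aux

/-- in a Coxeter group `W`, if `v₂` is not on a minimal gallery from `v₁`
to `w` (i.e. `ℓ(v₁⁻¹w) < ℓ(v₁⁻¹v₂) + ℓ(v₂⁻¹w)`), then there is a reflection `r` with
`ℓ(v₁⁻¹ r w) > ℓ(v₁⁻¹ w)` and `ℓ(v₂⁻¹ r w) < ℓ(v₂⁻¹ w)`. -/
theorem statement18 {B W : Type*} [Group W] {M : CoxeterMatrix B} (cs : CoxeterSystem M W)
    (v₁ v₂ w : W)
    (h : cs.length (v₁⁻¹ * w) < cs.length (v₁⁻¹ * v₂) + cs.length (v₂⁻¹ * w)) :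
    ∃ r : W, cs.IsReflection r ∧
      cs.length (v₁⁻¹ * w) < cs.length (v₁⁻¹ * (r * w)) ∧
      cs.length (v₂⁻¹ * (r * w)) < cs.length (v₂⁻¹ * w) := by
  classical
  set x := v₁⁻¹ * v₂ with hxdef
  set Y := v₂⁻¹ * w with hYdef
  set X := v₁⁻¹ * w with hXdef
  have hXxY : X = x * Y := by rw [hxdef, hYdef, hXdef]; group
  have key : ∃ τ : W, cs.IsReflection τ ∧ nu cs Y τ = 1 ∧ nu cs x (Y * τ * Y⁻¹) = 1 := by
    by_contra hno
    push_neg at hno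
    obtain ⟨ωY, hYred, hYw⟩ := cs.exists_reduced_word' Y
    obtain ⟨ωx, hxred, hxw⟩ := cs.exists_reduced_word' x
    obtain ⟨ωX, hXred, hXw⟩ := cs.exists_reduced_word' X
    set P := (cs.rightInvSeq ωY).toFinset with hP
    set Q := ((cs.rightInvSeq ωx).toFinset).image (fun u => Y⁻¹ * u * Y) with hQ
    have hmemP : ∀ τ ∈ P, cs.IsReflection τ ∧ nu cs Y τ = 1 := by
      intro τ hτ
      rw [hP, List.mem_toFinset] at hτ
      refine ⟨cs.isReflection_of_mem_rightInvSeq ωY hτ, ?_⟩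
      rw [hYw]
      exact (mem_ris_iff_nu cs hYred τ).mp hτ
    have hmemQ : ∀ τ ∈ Q, nu cs x (Y * τ * Y⁻¹) = 1 := by
      intro τ hτ
      rw [hQ, Finset.mem_image] at hτ
      obtain ⟨u, hu, rfl⟩ := hτ
      rw [List.mem_toFinset] at hu
      have h1 : nu cs x u = 1 := by
        rw [hxw]; exact (mem_ris_iff_nu cs hxred u).mp hu
      have hYu : Y * (Y⁻¹ * u * Y) * Y⁻¹ = u := by group
      rw [hYu]
      exact h1
    have hdisj : Disjoint P Q := by
      rw [Finset.disjoint_left]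
      intro τ hτP hτQ
      exact hno τ (hmemP τ hτP).1 (hmemP τ hτP).2 (hmemQ τ hτQ)
    have hsub : P ∪ Q ⊆ (cs.rightInvSeq ωX).toFinset := by
      intro τ hτ
      rw [List.mem_toFinset, mem_ris_iff_nu cs hXred, ← hXw]
      rw [Finset.mem_union] at hτ
      have hz2 : ∀ c : ZMod 2, c ≠ 1 → c = 0 := by decide
      rcases hτ with hτ | hτ
      · obtain ⟨hrefl, h1⟩ := hmemP τ hτ
        have h2 : nu cs x (Y * τ * Y⁻¹) = 0 := hz2 _ (hno τ hrefl h1)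
        rw [hXxY, nu_mul, h1, h2, add_zero]
      · have h2 : nu cs x (Y * τ * Y⁻¹) = 1 := hmemQ τ hτ
        have hτ' := hτ
        rw [hQ, Finset.mem_image] at hτ'
        obtain ⟨u, hu, rfl⟩ := hτ'
        rw [List.mem_toFinset] at hu
        have hrefl : cs.IsReflection (Y⁻¹ * u * Y) := by
          simpa using (cs.isReflection_of_mem_rightInvSeq ωx hu).conj Y⁻¹
        have h1 : nu cs Y (Y⁻¹ * u * Y) = 0 := hz2 _ (fun hc => hno _ hrefl hc h2)
        rw [hXxY, nu_mul, h1, h2, zero_add]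
    have hcardP : P.card = cs.length Y := by
      rw [hP, List.toFinset_card_of_nodup hYred.nodup_rightInvSeq, cs.length_rightInvSeq,
        hYw]
      exact hYred.symm
    have hcardQ : Q.card = cs.length x := by
      rw [hQ, Finset.card_image_of_injective _ (fun u v huv => by
        have h' : Y⁻¹ * u = Y⁻¹ * v := mul_right_cancel huv
        exact mul_left_cancel h')]
      rw [List.toFinset_card_of_nodup hxred.nodup_rightInvSeq, cs.length_rightInvSeq, hxw]
      exact hxred.symm
    have hcardX : ((cs.rightInvSeq ωX).toFinset).card = cs.length X := by
      rw [List.toFinset_card_of_nodup hXred.nodup_rightInvSeq, cs.length_rightInvSeq, hXw]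
      exact hXred.symm
    have hle := Finset.card_le_card hsub
    rw [Finset.card_union_of_disjoint hdisj, hcardP, hcardQ, hcardX] at hle
    omega
  obtain ⟨τ, hτrefl, h1, h2⟩ := key
  refine ⟨w * τ * w⁻¹, hτrefl.conj w, ?_, ?_⟩
  · have hrw : v₁⁻¹ * (w * τ * w⁻¹ * w) = X * τ := by rw [hXdef]; group
    rw [hrw]
    have hnuX : nu cs X τ = 0 := by
      rw [hXxY, nu_mul, h1, h2]
      decide
    exact (nu_eq_zero_iff cs hτrefl).mp hnuX
  · have hrw : v₂⁻¹ * (w * τ * w⁻¹ * w) = Y * τ := by rw [hYdef]; group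
    rw [hrw]
    exact (isRightInversion_of_nu_eq_one cs h1).2
end
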